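/- arXiv:1011.1752 — 5 statements merged into one kernel-verified Lean document; each statement's English description precedes it below -/
import Mathlib

section
/- Let n ∈ ℕ, let a_1, …, a_l ∈ ℝ be pairwise distinct points, and let d_1, …, d_l ∈ ℕ with d_i ≤ n for each i. Then the subspace ∑_{i=1}^l (u−a_i)^{d_i}·U_{n−d_i} of U_n (the space of sums of multiples of the (u−a_i)^{d_i} of degree ≤ n) has dimension min( n+1 , ∑_{i=1}^l (n−d_i+1) ). -/
/-!
The apolar pairing `⟨p, q⟩ = ∑_{j ≤ n} (-1)^j p^{(j)}(0) q^{(n-j)}(0)` on `U_n` may be evaluated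
at any point `t` instead of `0`: for `p, q ∈ U_n` the polynomial `∑_j (-1)^j p^{(j)} q^{(n-j)}` has
derivative zero, the sum telescoping. Evaluating at `t = a_i` on the powers `(u - a_i)^k` shows
that the orthogonal of `(u - a_i)^{d_i} U_{n-d_i}` in `U_n` consists of the multiples of
`(u - a_i)^{n-d_i+1}`. The case `d = 0`, with `⟨q, p⟩ = (-1)^n ⟨p, q⟩`, makes the pairing
nondegenerate, and the orthogonal of the whole sum consists of the multiples in `U_n` of
`G = ∏_i (u - a_i)^{n-d_i+1}`, a space of dimension `n + 1 - deg G` (truncated at `0`). So the sum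
has dimension `(n + 1) - (n + 1 - deg G) = min (n + 1) (deg G)`.
-/

open Polynomial Module
open scoped Nat

namespace LinearMap.BilinForm

theorem orthogonal_iSup {R M ι : Type*} [CommSemiring R] [AddCommMonoid M] [Module R M]
    (B : LinearMap.BilinForm R M) (N : ι → Submodule R M) :
    B.orthogonal (⨆ i, N i) = ⨅ i, B.orthogonal (N i) := by
  refine le_antisymm (le_iInf fun i => orthogonal_le (le_iSup N i)) fun q hq p hp => ?_
  rw [Submodule.mem_iInf] at hq
  exact Submodule.iSup_induction N (motive := fun p => B p q = 0) hp (fun i p hp => hq i p hp)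
    (by simp) fun x y hx hy => by simp [hx, hy]

theorem finrank_add_finrank_inf_orthogonal {K M : Type*} [Field K] [AddCommGroup M] [Module K M]
    {B : LinearMap.BilinForm K M} {U W : Submodule K M} [FiniteDimensional K U]
    (hU : ∀ p ∈ U, (∀ q ∈ U, B p q = 0) → p = 0) (hW : W ≤ U) :
    finrank K W + finrank K ↥(U ⊓ B.orthogonal W) = finrank K U := by
  have hker : LinearMap.ker (B.restrict U) = ⊥ := by
    refine (Submodule.eq_bot_iff _).mpr fun p hp => Subtype.ext <| hU p p.2 fun q hq => ?_
    exact LinearMap.congr_fun hp ⟨q, hq⟩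
  have horth : (B.restrict U).orthogonal (W.comap U.subtype) =
      (U ⊓ B.orthogonal W).comap U.subtype := by
    ext q
    simp only [mem_orthogonal_iff, Submodule.mem_comap, Submodule.subtype_apply, restrict_apply,
      domRestrict_apply, Subtype.forall, Submodule.comap_inf, Submodule.comap_subtype_self, le_top,
      inf_of_le_right]
    exact ⟨fun h p hp => h p (hW hp) hp, fun h p _ hp => h p hp⟩
  have := finrank_add_finrank_orthogonal' (B := B.restrict U) (W.comap U.subtype)
  rwa [hker, inf_bot_eq, finrank_bot, add_zero, horth,
    (Submodule.comapSubtypeEquivOfLe hW).finrank_eq,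
    (Submodule.comapSubtypeEquivOfLe inf_le_left).finrank_eq] at this

end LinearMap.BilinForm

namespace Polynomial

section CommRing

variable {R : Type*} [CommRing R]

theorem mem_degreeLT_succ_iff {n : ℕ} {p : R[X]} : p ∈ R[X]_(n + 1) ↔ p.natDegree ≤ n := by
  rw [degreeLT_succ_eq_degreeLE, mem_degreeLE, natDegree_le_iff_degree_le]

theorem natDegree_X_sub_C_pow [Nontrivial R] (t : R) (k : ℕ) : ((X - C t) ^ k).natDegree = k := by
  rw [(monic_X_sub_C t).natDegree_pow, natDegree_X_sub_C, mul_one]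

noncomputable def concomitant (n : ℕ) (p q : R[X]) : R[X] :=
  ∑ j ∈ Finset.range (n + 1), (-1 : R) ^ j • (derivative^[j] p * derivative^[n - j] q)

theorem eval_concomitant (n : ℕ) (p q : R[X]) (t : R) :
    (concomitant n p q).eval t = ∑ j ∈ Finset.range (n + 1),
      (-1) ^ j * ((derivative^[j] p).eval t * (derivative^[n - j] q).eval t) := by
  simp [concomitant, eval_finsetSum]

theorem derivative_concomitant {n : ℕ} {p q : R[X]} (hp : p.natDegree ≤ n) (hq : q.natDegree ≤ n) :
    derivative (concomitant n p q) = 0 := by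
  set f : ℕ → R[X] := fun j => (-1 : R) ^ j • (derivative^[j] p * derivative^[n + 1 - j] q)
  have hterm : ∀ j ∈ Finset.range (n + 1),
      derivative ((-1 : R) ^ j • (derivative^[j] p * derivative^[n - j] q)) = f j - f (j + 1) := by
    intro j hj
    have hjn : n + 1 - j = n - j + 1 := by have := Finset.mem_range.mp hj; omega
    simp only [f, hjn, derivative_smul, derivative_mul, pow_succ, mul_neg_one, neg_smul,
      sub_neg_eq_add, Nat.add_sub_add_right, Function.iterate_succ_apply', smul_add, add_comm]
  rw [concomitant, derivative_sum, Finset.sum_congr rfl hterm, Finset.sum_range_sub']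
  simp [f, iterate_derivative_eq_zero (Nat.lt_succ_of_le hp),
    iterate_derivative_eq_zero (Nat.lt_succ_of_le hq)]

noncomputable def apolar (n : ℕ) : LinearMap.BilinForm R R[X] :=
  ∑ j ∈ Finset.range (n + 1), (-1 : R) ^ j • LinearMap.BilinForm.linMulLin
    ((leval 0).comp (derivative ^ j)) ((leval 0).comp (derivative ^ (n - j)))

theorem apolar_apply (n : ℕ) (p q : R[X]) : apolar n p q = (concomitant n p q).eval 0 := by
  simp [apolar, eval_concomitant, LinearMap.BilinForm.linMulLin_apply, Module.End.pow_apply]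

theorem apolar_swap (n : ℕ) (p q : R[X]) : apolar n q p = (-1) ^ n * apolar n p q := by
  rw [apolar_apply, apolar_apply, eval_concomitant, eval_concomitant, Finset.mul_sum,
    ← Finset.sum_range_reflect]
  refine Finset.sum_congr rfl fun j hj => ?_
  obtain ⟨k, rfl⟩ := Nat.exists_eq_add_of_le (Nat.lt_succ_iff.mp (Finset.mem_range.mp hj))
  have hsq : ((-1 : R) ^ j) * (-1) ^ j = 1 := by rw [← mul_pow, neg_one_mul, neg_neg, one_pow]
  simp only [add_tsub_cancel_right, add_tsub_cancel_left, pow_add]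
  linear_combination (-(-1) ^ k * (derivative^[j] p).eval 0 * (derivative^[k] q).eval 0) * hsq

theorem apolar_eq_eval_concomitant [IsAddTorsionFree R] {n : ℕ} {p q : R[X]}
    (hp : p.natDegree ≤ n) (hq : q.natDegree ≤ n) (t : R) :
    apolar n p q = (concomitant n p q).eval t := by
  obtain ⟨c, hc⟩ := natDegree_eq_zero.mp (derivative_eq_zero.mp (derivative_concomitant hp hq))
  rw [apolar_apply, ← hc, eval_C, eval_C]

theorem isRoot_iterate_derivative_of_X_sub_C_pow_dvd {p : R[X]} {t : R} {m j : ℕ}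
    (h : (X - C t) ^ m ∣ p) (hj : j < m) : (derivative^[j] p).IsRoot t :=
  dvd_iff_isRoot.mp <| (dvd_pow_self _ (Nat.sub_ne_zero_of_lt hj)).trans
    (pow_sub_dvd_iterate_derivative_of_pow_dvd j h)

theorem apolar_eq_zero_of_dvd [IsAddTorsionFree R] {n d : ℕ} {p q : R[X]} {t : R}
    (hp : p.natDegree ≤ n) (hq : q.natDegree ≤ n)
    (hpd : (X - C t) ^ d ∣ p) (hqd : (X - C t) ^ (n - d + 1) ∣ q) : apolar n p q = 0 := by
  rw [apolar_eq_eval_concomitant hp hq t, eval_concomitant]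
  refine Finset.sum_eq_zero fun j hj => ?_
  rcases lt_or_ge j d with hjd | hjd
  · rw [(isRoot_iterate_derivative_of_X_sub_C_pow_dvd hpd hjd).eq_zero, zero_mul, mul_zero]
  · rw [(isRoot_iterate_derivative_of_X_sub_C_pow_dvd hqd (by omega)).eq_zero, mul_zero, mul_zero]

theorem apolar_X_sub_C_pow [IsAddTorsionFree R] {n k : ℕ} {q : R[X]} (hk : k ≤ n)
    (hq : q.natDegree ≤ n) (t : R) :
    apolar n ((X - C t) ^ k) q = (-1) ^ k * (k ! * (derivative^[n - k] q).eval t) := by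
  have hp : ((X - C t) ^ k).natDegree ≤ n := by
    nontriviality R
    rwa [natDegree_X_sub_C_pow]
  rw [apolar_eq_eval_concomitant hp hq t, eval_concomitant,
    Finset.sum_eq_single_of_mem k (Finset.mem_range.mpr (Nat.lt_succ_of_le hk))]
  · simp [iterate_derivative_X_sub_pow_self]
  · intro j _ hjk
    rw [iterate_derivative_X_sub_pow]
    rcases lt_or_gt_of_ne hjk with h | h
    · simp [Nat.sub_eq_zero_iff_le, h.not_ge]
    · simp [Nat.descFactorial_eq_zero_iff_lt.mpr h]

theorem X_sub_C_pow_dvd_of_isRoot_iterate_derivative [IsDomain R] [CharZero R] {p : R[X]} {t : R}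
    {m : ℕ} (h : ∀ j ≤ m, (derivative^[j] p).IsRoot t) : (X - C t) ^ (m + 1) ∣ p := by
  rcases eq_or_ne p 0 with rfl | hp
  · exact dvd_zero _
  · exact (le_rootMultiplicity_iff hp).mp (lt_rootMultiplicity_of_isRoot_iterate_derivative hp h)

end CommRing

section Field

variable {K : Type*} [Field K]

theorem degreeLT_inf_span_singleton {g : K[X]} (hg : g ≠ 0) (m : ℕ) :
    K[X]_m ⊓ (Ideal.span {g}).restrictScalars K =
      (K[X]_(m - g.natDegree)).map (LinearMap.mulLeft K g) := by
  have hdeg : ∀ h : K[X], g * h ∈ K[X]_m ↔ h ∈ K[X]_(m - g.natDegree) := by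
    intro h
    rcases eq_or_ne h 0 with rfl | hh
    · simp
    rw [mem_degreeLT, mem_degreeLT, ← natDegree_lt_iff_degree_lt (mul_ne_zero hg hh),
      ← natDegree_lt_iff_degree_lt hh, natDegree_mul hg hh]
    omega
  ext p
  simp only [Submodule.mem_inf, Submodule.restrictScalars_mem, Ideal.mem_span_singleton,
    Submodule.mem_map, LinearMap.mulLeft_apply]
  constructor
  · rintro ⟨hp, h, rfl⟩
    exact ⟨h, (hdeg h).mp hp, rfl⟩
  · rintro ⟨h, hh, rfl⟩
    exact ⟨(hdeg h).mpr hh, dvd_mul_right g h⟩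

theorem finrank_degreeLT (m : ℕ) : finrank K K[X]_m = m := by
  rw [finrank_eq_card_basis (degreeLT.basis K m), Fintype.card_fin]

theorem finrank_degreeLT_inf_span_singleton {g : K[X]} (hg : g ≠ 0) (m : ℕ) :
    finrank K ↥(K[X]_m ⊓ (Ideal.span {g}).restrictScalars K) = m - g.natDegree := by
  rw [degreeLT_inf_span_singleton hg, ← (Submodule.equivMapOfInjective _
    (mul_right_injective₀ hg) _).finrank_eq, finrank_degreeLT]

theorem span_mul_degreeLE {g : K[X]} (hg : g ≠ 0) {n : ℕ} (hgn : g.natDegree ≤ n) :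
    Submodule.span K {p | ∃ h ∈ degreeLE K ↑(n - g.natDegree), p = g * h} =
      K[X]_(n + 1) ⊓ (Ideal.span {g}).restrictScalars K := by
  rw [← degreeLT_succ_eq_degreeLE, degreeLT_inf_span_singleton hg,
    ← Nat.sub_add_comm hgn, ← Submodule.span_eq (Submodule.map _ _)]
  congr 1
  ext p
  simp only [Set.mem_ofPred_eq, Submodule.map_coe, LinearMap.mulLeft_apply, Set.mem_image,
    SetLike.mem_coe, eq_comm]

variable [CharZero K]

theorem mem_orthogonal_apolar_iff {n d : ℕ} (hd : d ≤ n) {t : K} {q : K[X]}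
    (hq : q.natDegree ≤ n) :
    q ∈ (apolar n).orthogonal (K[X]_(n + 1) ⊓ (Ideal.span {(X - C t) ^ d}).restrictScalars K) ↔
      (X - C t) ^ (n - d + 1) ∣ q := by
  constructor
  · intro h
    refine X_sub_C_pow_dvd_of_isRoot_iterate_derivative fun j hj => ?_
    have hmem : (X - C t) ^ (n - j) ∈
        K[X]_(n + 1) ⊓ (Ideal.span {(X - C t) ^ d}).restrictScalars K :=
      ⟨mem_degreeLT_succ_iff.mpr ((natDegree_X_sub_C_pow t _).trans_le (Nat.sub_le n j)),
        Ideal.mem_span_singleton.mpr (pow_dvd_pow _ (by omega))⟩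
    have horth : apolar n ((X - C t) ^ (n - j)) q = 0 := h _ hmem
    rw [apolar_X_sub_C_pow (Nat.sub_le n j) hq, Nat.sub_sub_self (by omega)] at horth
    simpa [Nat.factorial_ne_zero] using horth
  · rintro hqd p ⟨hp, hpd⟩
    exact apolar_eq_zero_of_dvd (mem_degreeLT_succ_iff.mp hp) hq
      (Ideal.mem_span_singleton.mp hpd) hqd

theorem eq_zero_of_forall_apolar_eq_zero {n : ℕ} {p : K[X]} (hp : p ∈ K[X]_(n + 1))
    (h : ∀ q ∈ K[X]_(n + 1), apolar n p q = 0) : p = 0 := by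
  have hp' := mem_degreeLT_succ_iff.mp hp
  have horth : p ∈ (apolar n).orthogonal
      (K[X]_(n + 1) ⊓ (Ideal.span {(X - C 0) ^ 0}).restrictScalars K) := fun q hq => by
    rw [apolar_swap, h q hq.1, mul_zero]
  refine eq_zero_of_dvd_of_natDegree_lt ((mem_orthogonal_apolar_iff n.zero_le hp').mp horth) ?_
  rw [natDegree_X_sub_C_pow]
  omega

end Field

end Polynomial

/-- for pairwise distinct points `a_1, …, a_l` and `d_i ≤ n`, the subspace
`∑_{i=1}^l (u - a_i)^{d_i} · U_{n - d_i}` of `U_n` has dimension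
`min (n+1) (∑_i (n - d_i + 1))`. -/
theorem finrank_sum_shifted_powers
    (n l : ℕ) (a : Fin l → ℝ) (ha : Function.Injective a)
    (d : Fin l → ℕ) (hd : ∀ i, d i ≤ n) :
    Module.finrank ℝ
        ↥(⨆ i : Fin l, Submodule.span ℝ
            {p : Polynomial ℝ | ∃ h ∈ Polynomial.degreeLE ℝ ((n - d i : ℕ) : WithBot ℕ),
              p = (Polynomial.X - Polynomial.C (a i)) ^ (d i) * h}) =
      min (n + 1) (∑ i, (n - d i + 1)) := by
  set U := ℝ[X]_(n + 1)
  set V : Fin l → Submodule ℝ ℝ[X] := fun i =>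
    U ⊓ (Ideal.span {(X - C (a i)) ^ d i}).restrictScalars ℝ
  set G := ∏ i, (X - C (a i)) ^ (n - d i + 1)
  have hG : G.Monic := monic_prod_of_monic _ _ fun i _ => (monic_X_sub_C (a i)).pow _
  have hspan : ∀ i, Submodule.span ℝ
      {p | ∃ h ∈ degreeLE ℝ ↑(n - d i), p = (X - C (a i)) ^ d i * h} = V i := fun i => by
    simpa only [natDegree_X_sub_C_pow] using span_mul_degreeLE (pow_ne_zero _ (X_sub_C_ne_zero _))
      ((natDegree_X_sub_C_pow (a i) (d i)).trans_le (hd i))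
  have horth : U ⊓ (apolar n).orthogonal (⨆ i, V i) = U ⊓ (Ideal.span {G}).restrictScalars ℝ := by
    ext q
    simp only [LinearMap.BilinForm.orthogonal_iSup, Submodule.mem_inf, Submodule.mem_iInf,
      Submodule.restrictScalars_mem, Ideal.mem_span_singleton]
    refine and_congr_right fun hq => ?_
    have hq' := mem_degreeLT_succ_iff.mp hq
    exact (forall_congr' fun i => mem_orthogonal_apolar_iff (hd i) hq').trans
      ⟨Fintype.prod_dvd_of_coprime fun i j hij => (pairwise_coprime_X_sub_C ha hij).pow,
        fun h i => (Finset.dvd_prod_of_mem (fun i => (X - C (a i)) ^ (n - d i + 1))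
          (Finset.mem_univ i)).trans h⟩
  have key := LinearMap.BilinForm.finrank_add_finrank_inf_orthogonal (B := apolar n)
    (fun p hp => eq_zero_of_forall_apolar_eq_zero hp) (iSup_le fun i => inf_le_left : ⨆ i, V i ≤ U)
  rw [horth, finrank_degreeLT_inf_span_singleton hG.ne_zero, finrank_degreeLT,
    natDegree_prod_of_monic _ _ fun i _ => (monic_X_sub_C (a i)).pow _] at key
  simp only [natDegree_X_sub_C_pow] at key
  rw [iSup_congr hspan]
  omega
end

section
/- Let n ∈ ℕ, let a_1, …, a_l ∈ ℝ be pairwise distinct points, and let d_1, …, d_l ∈ ℕ with d_i ≤ n for each i. Then the quotient space U_n / ∑_{i=1}^l (u−a_i)^{d_i}·U_{n−d_i} has dimension max( 0 , n+1 − ∑_{i=1}^l (n−d_i+1) ). -/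
/-!
The apolar pairing `⟨p, q⟩ = ∑ⱼ (-1)ʲ p⁽ʲ⁾ q⁽ⁿ⁻ʲ⁾` on `U_n` is a constant polynomial (its
derivative telescopes), so it may be evaluated at any point. Evaluating at `a` shows that
`(u - a)^d · U_{n-d}` and `(u - a)^(n-d+1) · U_{d-1}` are orthogonal, and since the pairing is
nondegenerate a dimension count makes them each other's orthogonal complement. Hence the orthogonal
of `∑ᵢ (u - aᵢ)^dᵢ · U_{n-dᵢ}` is the space of multiples of degree `≤ n` of the pairwise coprime
product `G = ∏ᵢ (u - aᵢ)^(n-dᵢ+1)`, of dimension `max 0 (n + 1 - deg G)`, and the codimension of a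
subspace is the dimension of its orthogonal.
-/

open Module Submodule Finset
open scoped Nat

namespace LinearMap.BilinForm

variable {R M : Type*} [CommRing R] [AddCommGroup M] [Module R M] (B : LinearMap.BilinForm R M)
  {V : Submodule R M}

lemma mem_orthogonal_restrict_comap_subtype_iff {N : Submodule R M} (hN : N ≤ V) {x : V} :
    x ∈ (B.restrict V).orthogonal (comap V.subtype N) ↔ ∀ y ∈ N, B y x = 0 :=
  ⟨fun hx y hy => hx ⟨y, hN hy⟩ hy, fun hx y hy => hx y hy⟩

lemma orthogonal_restrict_comap_subtype_iSup {ι : Sort*} {N : ι → Submodule R M}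
    (hN : ∀ i, N i ≤ V) :
    (B.restrict V).orthogonal (comap V.subtype (⨆ i, N i)) =
      ⨅ i, (B.restrict V).orthogonal (comap V.subtype (N i)) := by
  ext x
  simp only [mem_iInf, mem_orthogonal_restrict_comap_subtype_iff B (hN _),
    mem_orthogonal_restrict_comap_subtype_iff B (iSup_le hN)]
  have hker : ∀ N : Submodule R M, (∀ y ∈ N, B y x = 0) ↔ N ≤ LinearMap.ker (B.flip x) :=
    fun N => Iff.rfl
  simp only [hker, iSup_le_iff]

lemma finrank_quotient_eq_finrank_orthogonal {K V : Type*} [Field K]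
    [AddCommGroup V] [Module K V] [FiniteDimensional K V] {B : LinearMap.BilinForm K V}
    (hB : B.Nondegenerate) (W : Submodule K V) :
    finrank K (V ⧸ W) = finrank K (B.orthogonal W) := by
  have := W.finrank_quotient_add_finrank
  rw [finrank_orthogonal hB]
  omega

end LinearMap.BilinForm

namespace Polynomial

section CommRing

variable {R : Type*} [CommRing R]

noncomputable def apolarPoly (n : ℕ) (p q : R[X]) : R[X] :=
  ∑ j ∈ range (n + 1), (-1) ^ j * (derivative^[j] p * derivative^[n - j] q)

noncomputable def apolarForm (n : ℕ) : LinearMap.BilinForm R R[X] :=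
  ∑ j ∈ range (n + 1), (-1 : R) ^ j •
    ((LinearMap.mul R R[X]).compl₁₂ (derivative ^ j) (derivative ^ (n - j))).compr₂ (leval 0)

lemma apolarForm_apply (n : ℕ) (p q : R[X]) : apolarForm n p q = (apolarPoly n p q).eval 0 := by
  simp [apolarForm, apolarPoly, eval_finsetSum, LinearMap.sum_apply, Module.End.pow_apply]

lemma eval_zero_iterate_derivative (p : R[X]) (j : ℕ) :
    (derivative^[j] p).eval 0 = j ! * p.coeff j := by
  rw [← coeff_zero_eq_eval_zero, coeff_iterate_derivative, zero_add, Nat.descFactorial_self,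
    nsmul_eq_mul]

lemma apolarForm_apply_eq_sum_coeff (n : ℕ) (p q : R[X]) :
    apolarForm n p q =
      ∑ j ∈ range (n + 1), (-1) ^ j * (j ! * (n - j)!) * (p.coeff j * q.coeff (n - j)) := by
  simp only [apolarForm_apply, apolarPoly, eval_finsetSum, eval_mul, eval_pow, eval_neg,
    eval_one, eval_zero_iterate_derivative]
  exact sum_congr rfl fun j _ => by ring

lemma apolarForm_swap (n : ℕ) (p q : R[X]) : apolarForm n q p = (-1) ^ n * apolarForm n p q := by
  rw [apolarForm_apply_eq_sum_coeff, apolarForm_apply_eq_sum_coeff, mul_sum,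
    ← sum_range_reflect]
  refine sum_congr rfl fun j hj => ?_
  have hjn : j ≤ n := Nat.lt_succ_iff.mp (mem_range.mp hj)
  rw [show n + 1 - 1 - j = n - j by omega, Nat.sub_sub_self hjn,
    show (-1 : R) ^ n = (-1) ^ (n - j) * (-1) ^ j by rw [← pow_add, Nat.sub_add_cancel hjn]]
  have hsq : (-1 : R) ^ j * (-1) ^ j = 1 := by rw [← mul_pow]; simp
  linear_combination (-(-1 : R) ^ (n - j) * (j ! * (n - j)!) * (p.coeff j * q.coeff (n - j))) * hsq

lemma derivative_apolarPoly {n : ℕ} {p q : R[X]} (hp : p.natDegree ≤ n) (hq : q.natDegree ≤ n) :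
    derivative (apolarPoly n p q) = 0 := by
  set F : ℕ → R[X] := fun j => (-1) ^ j * (derivative^[j] p * derivative^[n + 1 - j] q)
  have hterm : ∀ j ∈ range (n + 1), derivative ((-1) ^ j *
      (derivative^[j] p * derivative^[n - j] q)) = F j - F (j + 1) := fun j hj => by
    have hjn : j ≤ n := Nat.lt_succ_iff.mp (mem_range.mp hj)
    simp only [F, derivative_mul, derivative_pow, derivative_neg, derivative_one, neg_zero,
      zero_mul, mul_zero, zero_add, ← Function.iterate_succ_apply' derivative,
      show n + 1 - (j + 1) = n - j by omega, show n + 1 - j = (n - j).succ by omega]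
    ring
  rw [apolarPoly, derivative_sum, sum_congr rfl hterm, sum_range_sub']
  simp [F, iterate_derivative_eq_zero (Nat.lt_succ_of_le hp),
    iterate_derivative_eq_zero (Nat.lt_succ_of_le hq)]

lemma eval_iterate_derivative_eq_zero_of_pow_dvd {p : R[X]} {a : R} {j k : ℕ}
    (hp : (X - C a) ^ k ∣ p) (hjk : j < k) : (derivative^[j] p).eval a = 0 :=
  dvd_iff_isRoot.mp <| (dvd_pow_self _ (by omega)).trans
    (pow_sub_dvd_iterate_derivative_of_pow_dvd j hp)

lemma apolarForm_X_pow (n : ℕ) (p : R[X]) {k : ℕ} (hk : k ≤ n) :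
    apolarForm n p (X ^ k : R[X]) = (-1) ^ (n - k) * ((n - k)! * k !) * p.coeff (n - k) := by
  rw [apolarForm_apply_eq_sum_coeff, sum_eq_single (n - k)]
  · rw [Nat.sub_sub_self hk, coeff_X_pow_self]
    ring
  · intro j hj hjk
    rw [coeff_X_pow, if_neg (by have := mem_range.mp hj; omega), mul_zero, mul_zero]
  · intro h
    exact absurd (mem_range.mpr (by omega)) h

lemma apolarForm_isRefl (n : ℕ) : (apolarForm (R := R) n).IsRefl :=
  fun p q hpq => by rw [apolarForm_swap, hpq, mul_zero]

end CommRing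

section IsAddTorsionFree

variable {R : Type*} [CommRing R] [IsAddTorsionFree R]

lemma apolarForm_eq_eval_apolarPoly {n : ℕ} {p q : R[X]} (hp : p.natDegree ≤ n)
    (hq : q.natDegree ≤ n) (x : R) : apolarForm n p q = (apolarPoly n p q).eval x := by
  rw [apolarForm_apply, eq_C_of_derivative_eq_zero (derivative_apolarPoly hp hq), eval_C, eval_C]

lemma apolarForm_eq_zero_of_pow_dvd {n k m : ℕ} {a : R} {p q : R[X]} (hp : p.natDegree ≤ n)
    (hq : q.natDegree ≤ n) (hpk : (X - C a) ^ k ∣ p) (hqm : (X - C a) ^ m ∣ q) (hkm : n < k + m) :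
    apolarForm n p q = 0 := by
  rw [apolarForm_eq_eval_apolarPoly hp hq a, apolarPoly, eval_finsetSum]
  refine sum_eq_zero fun j hj => ?_
  rcases lt_or_ge j k with hjk | hjk
  · simp [eval_iterate_derivative_eq_zero_of_pow_dvd hpk hjk]
  · have hjn := mem_range.mp hj
    simp [eval_iterate_derivative_eq_zero_of_pow_dvd hqm (show n - j < m by omega)]

end IsAddTorsionFree

section Semiring

variable {R : Type*} [Semiring R]

instance (n : ℕ) : Module.Finite R (degreeLE R n) := by
  rw [← degreeLT_succ_eq_degreeLE]
  infer_instance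

lemma finrank_degreeLE [StrongRankCondition R] (n : ℕ) : finrank R (degreeLE R n) = n + 1 := by
  rw [← degreeLT_succ_eq_degreeLE, finrank_eq_card_basis (degreeLT.basis R (n + 1)),
    Fintype.card_fin]

lemma natDegree_le_of_mem_degreeLE {n : ℕ} {p : R[X]} (hp : p ∈ degreeLE R n) :
    p.natDegree ≤ n :=
  natDegree_le_iff_degree_le.mpr (mem_degreeLE.mp hp)

lemma X_pow_mem_degreeLE {n k : ℕ} (hk : k ≤ n) : (X ^ k : R[X]) ∈ degreeLE R n :=
  mem_degreeLE.mpr ((degree_X_pow_le k).trans (by exact_mod_cast hk))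

end Semiring

section Field

variable (K : Type*) [Field K]

/-- The paper's `g · U_{n - deg g}`, as a subspace of `U_n = degreeLE K n`. -/
noncomputable def multiplesDegreeLE (n : ℕ) (g : K[X]) : Submodule K (degreeLE K n) :=
  comap (degreeLE K n).subtype ((Ideal.span {g}).restrictScalars K)

variable {K} {n : ℕ} {g : K[X]}

lemma map_mulLeft_degreeLT (hg : g ≠ 0) :
    (degreeLT K (n + 1 - g.natDegree)).map (LinearMap.mulLeft K g) =
      (Ideal.span {g}).restrictScalars K ⊓ degreeLE K n := by
  ext p
  simp only [Submodule.mem_map, LinearMap.mulLeft_apply, Submodule.mem_inf, restrictScalars_mem,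
    Ideal.mem_span_singleton, mem_degreeLT, mem_degreeLE]
  constructor
  · rintro ⟨h, hh, rfl⟩
    refine ⟨dvd_mul_right g h, ?_⟩
    rcases eq_or_ne h 0 with rfl | h0
    · simp
    rw [degree_eq_natDegree h0, Nat.cast_lt] at hh
    rw [← natDegree_le_iff_degree_le, natDegree_mul hg h0]
    omega
  · rintro ⟨⟨h, rfl⟩, hp⟩
    refine ⟨h, ?_, rfl⟩
    rcases eq_or_ne h 0 with rfl | h0
    · simp
    rw [← natDegree_le_iff_degree_le, natDegree_mul hg h0] at hp
    rw [degree_eq_natDegree h0, Nat.cast_lt]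
    omega

lemma span_setOf_mul_eq (hg : g ≠ 0) (hgn : g.natDegree ≤ n) :
    span K {p | ∃ h ∈ degreeLE K ↑(n - g.natDegree), p = g * h} =
      (Ideal.span {g}).restrictScalars K ⊓ degreeLE K n := by
  rw [← map_mulLeft_degreeLT hg, Nat.sub_add_comm hgn, degreeLT_succ_eq_degreeLE,
    ← span_eq (Submodule.map (LinearMap.mulLeft K g) (degreeLE K ↑(n - g.natDegree)))]
  congr 1
  ext p
  simp [eq_comm]

lemma comap_subtype_inf_degreeLE :
    comap (degreeLE K n).subtype ((Ideal.span {g}).restrictScalars K ⊓ degreeLE K n) =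
      multiplesDegreeLE K n g := by
  rw [comap_inf, comap_subtype_self, inf_top_eq, multiplesDegreeLE]

lemma finrank_multiplesDegreeLE (hg : g ≠ 0) :
    finrank K (multiplesDegreeLE K n g) = n + 1 - g.natDegree := by
  rw [← comap_subtype_inf_degreeLE, (comapSubtypeEquivOfLe inf_le_right).finrank_eq,
    ← map_mulLeft_degreeLT hg,
    ← (equivMapOfInjective _ (mul_right_injective₀ hg) _).finrank_eq,
    finrank_eq_card_basis (degreeLT.basis K _), Fintype.card_fin]

lemma iInf_multiplesDegreeLE {ι : Type*} [Fintype ι] {g : ι → K[X]}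
    (hg : Pairwise (Function.onFun IsCoprime g)) :
    ⨅ i, multiplesDegreeLE K n (g i) = multiplesDegreeLE K n (∏ i, g i) := by
  ext x
  simp only [multiplesDegreeLE, mem_iInf, mem_comap, restrictScalars_mem,
    Ideal.mem_span_singleton]
  exact ⟨fun h => prod_dvd_of_coprime (hg.set_pairwise _) fun i _ => h i,
    fun h i => (dvd_prod_of_mem g (mem_univ i)).trans h⟩

end Field

section CharZero

variable {K : Type*} [Field K] [CharZero K] {n : ℕ}

lemma apolarForm_restrict_nondegenerate :
    ((apolarForm n).restrict (degreeLE K n)).Nondegenerate := by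
  have hrefl : ((apolarForm n).restrict (degreeLE K n)).IsRefl :=
    fun p q => apolarForm_isRefl n (p : K[X]) q
  refine (LinearMap.IsRefl.nondegenerate_iff_separatingLeft hrefl).mpr fun p hp => ?_
  refine Subtype.ext (Polynomial.ext fun m => ?_)
  rcases le_or_gt m n with hm | hm
  · have h := hp ⟨X ^ (n - m), X_pow_mem_degreeLE (Nat.sub_le n m)⟩
    simp only [LinearMap.BilinForm.restrict_apply, LinearMap.domRestrict_apply] at h
    rw [apolarForm_X_pow n _ (Nat.sub_le n m), Nat.sub_sub_self hm] at h
    simpa [Nat.factorial_ne_zero] using h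
  · exact coeff_eq_zero_of_natDegree_lt ((natDegree_le_of_mem_degreeLE p.2).trans_lt hm)

lemma apolarForm_restrict_orthogonal_multiplesDegreeLE (a : K) {d : ℕ} (hd : d ≤ n) :
    ((apolarForm n).restrict (degreeLE K n)).orthogonal
        (multiplesDegreeLE K n ((X - C a) ^ d)) =
      multiplesDegreeLE K n ((X - C a) ^ (n - d + 1)) := by
  have hle : multiplesDegreeLE K n ((X - C a) ^ (n - d + 1)) ≤
      ((apolarForm n).restrict (degreeLE K n)).orthogonal
        (multiplesDegreeLE K n ((X - C a) ^ d)) := fun q hq p hp =>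
    apolarForm_eq_zero_of_pow_dvd (natDegree_le_of_mem_degreeLE p.2)
      (natDegree_le_of_mem_degreeLE q.2) (Ideal.mem_span_singleton.mp hp)
      (Ideal.mem_span_singleton.mp hq) (by omega)
  refine (eq_of_le_of_finrank_le hle ?_).symm
  rw [LinearMap.BilinForm.finrank_orthogonal apolarForm_restrict_nondegenerate, finrank_degreeLE,
    finrank_multiplesDegreeLE (pow_ne_zero _ (X_sub_C_ne_zero a)),
    finrank_multiplesDegreeLE (pow_ne_zero _ (X_sub_C_ne_zero a)), natDegree_pow,
    natDegree_pow, natDegree_X_sub_C]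
  omega

lemma apolarForm_restrict_orthogonal_iSup {ι : Type*} [Fintype ι] {a : ι → K}
    (ha : Function.Injective a) {d : ι → ℕ} (hd : ∀ i, d i ≤ n) :
    ((apolarForm n).restrict (degreeLE K n)).orthogonal (comap (degreeLE K n).subtype
        (⨆ i, (Ideal.span {(X - C (a i)) ^ d i}).restrictScalars K ⊓ degreeLE K n)) =
      multiplesDegreeLE K n (∏ i, (X - C (a i)) ^ (n - d i + 1)) := by
  rw [LinearMap.BilinForm.orthogonal_restrict_comap_subtype_iSup _ fun i => inf_le_right,
    ← iInf_multiplesDegreeLE fun i j hij => (pairwise_coprime_X_sub_C ha hij).pow]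
  simp only [comap_subtype_inf_degreeLE, apolarForm_restrict_orthogonal_multiplesDegreeLE _ (hd _)]

end CharZero

end Polynomial

open Polynomial

/-- for pairwise distinct points `a_1, …, a_l` and `d_i ≤ n`, the quotient space
`U_n / ∑_{i=1}^l (u - a_i)^{d_i} · U_{n - d_i}` has dimension
`max (0) (n + 1 - ∑_i (n - d_i + 1))`. -/
theorem finrank_quotient_sum_shifted_powers
    (n l : ℕ) (a : Fin l → ℝ) (ha : Function.Injective a)
    (d : Fin l → ℕ) (hd : ∀ i, d i ≤ n) :
    (Module.finrank ℝ
        (↥(Polynomial.degreeLE ℝ (n : WithBot ℕ)) ⧸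
          Submodule.comap (Polynomial.degreeLE ℝ (n : WithBot ℕ)).subtype
            (⨆ i : Fin l, Submodule.span ℝ
              {p : Polynomial ℝ | ∃ h ∈ Polynomial.degreeLE ℝ ((n - d i : ℕ) : WithBot ℕ),
                p = (Polynomial.X - Polynomial.C (a i)) ^ (d i) * h})) : ℤ) =
      max 0 ((n : ℤ) + 1 - ∑ i, ((n : ℤ) - (d i : ℤ) + 1)) := by
  have hne : ∀ (x : ℝ) (k : ℕ), (X - C x) ^ k ≠ 0 := fun x k => pow_ne_zero k (X_sub_C_ne_zero x)
  have hspan : ∀ i, span ℝ {p : ℝ[X] | ∃ h ∈ degreeLE ℝ ((n - d i : ℕ) : WithBot ℕ),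
      p = (X - C (a i)) ^ (d i) * h} =
      (Ideal.span {(X - C (a i)) ^ d i}).restrictScalars ℝ ⊓ degreeLE ℝ n := fun i => by
    simpa only [natDegree_pow, natDegree_X_sub_C, mul_one] using
      span_setOf_mul_eq (hne (a i) (d i)) (by simpa using hd i)
  rw [iSup_congr hspan,
    LinearMap.BilinForm.finrank_quotient_eq_finrank_orthogonal apolarForm_restrict_nondegenerate,
    apolarForm_restrict_orthogonal_iSup ha hd,
    finrank_multiplesDegreeLE (prod_ne_zero_iff.mpr fun i _ => hne _ _),
    natDegree_prod _ _ fun i _ => hne _ _]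
  simp only [natDegree_pow, natDegree_X_sub_C, mul_one]
  have hsum : ((∑ i, (n - d i + 1) : ℕ) : ℤ) = ∑ i, ((n : ℤ) - d i + 1) := by
    push_cast [Nat.cast_sub (hd _)]
    rfl
  omega
end

section
/- Let m, m', r, r' ∈ ℕ and a, b ∈ ℝ. Let I be the set of polynomials of bidegree ≤ (m,m') belonging to the ideal ((s−a)^{r+1}, (t−b)^{r'+1}) of ℝ[s,t], i.e. I = R_{m,m'} ∩ ((s−a)^{r+1}, (t−b)^{r'+1}). Then the quotient vector space R_{m,m'}/I has dimension (min(r,m)+1)·(min(r',m')+1). -/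
open MvPolynomial

noncomputable def Rmm (m m' : ℕ) : Submodule ℝ (MvPolynomial (Fin 2) ℝ) where
  carrier := {p | ∀ d ∈ p.support, d 0 ≤ m ∧ d 1 ≤ m'}
  add_mem' := by
    intro p q hp hq d hd
    rcases Finset.mem_union.mp (MvPolynomial.support_add hd) with h | h
    · exact hp d h
    · exact hq d h
  zero_mem' := by intro d hd; simp at hd
  smul_mem' := by
    intro c p hp d hd
    exact hp d (MvPolynomial.support_smul hd)


noncomputable section AuxVertex

/-- Translation automorphism `s ↦ s + a`, `t ↦ t + b`. -/
def tauAB (a b : ℝ) : MvPolynomial (Fin 2) ℝ ≃ₐ[ℝ] MvPolynomial (Fin 2) ℝ :=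
  AlgEquiv.ofAlgHom
    (aeval ![X 0 + C a, X 1 + C b])
    (aeval ![X 0 - C a, X 1 - C b])
    (by ext i : 1; fin_cases i <;> simp)
    (by ext i : 1; fin_cases i <;> simp)

lemma tauAB_monomial (a b : ℝ) (d : Fin 2 →₀ ℕ) (c : ℝ) :
    tauAB a b (monomial d c) = C c * ((X 0 + C a) ^ (d 0) * (X 1 + C b) ^ (d 1)) := by
  show aeval ![X 0 + C a, X 1 + C b] (monomial d c) = _
  rw [aeval_monomial, Finsupp.prod_fintype _ _ (fun i => pow_zero _), Fin.prod_univ_two]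
  simp [algebraMap_eq]

lemma mem_Rmm_iff {m m' : ℕ} {p : MvPolynomial (Fin 2) ℝ} :
    p ∈ Rmm m m' ↔ degreeOf 0 p ≤ m ∧ degreeOf 1 p ≤ m' := by
  constructor
  · intro h
    exact ⟨degreeOf_le_iff.mpr fun d hd => (h d hd).1,
      degreeOf_le_iff.mpr fun d hd => (h d hd).2⟩
  · intro h d hd
    exact ⟨degreeOf_le_iff.mp h.1 d hd, degreeOf_le_iff.mp h.2 d hd⟩

lemma degreeOf_binom_pow (i j : Fin 2) (c : ℝ) (k : ℕ) :
    degreeOf i ((X j + C c) ^ k) ≤ if i = j then k else 0 := by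
  refine (degreeOf_pow_le _ _ _).trans ?_
  have h : degreeOf i (X j + C c) ≤ if i = j then 1 else 0 := by
    refine (degreeOf_add_le _ _ _).trans ?_
    simp only [degreeOf_X, degreeOf_C]
    split <;> simp
  calc k * degreeOf i (X j + C c) ≤ k * (if i = j then 1 else 0) := Nat.mul_le_mul_left _ h
    _ ≤ _ := by split <;> simp

lemma pow_mul_pow_mem_Rmm {m m' : ℕ} (a b : ℝ) {k l : ℕ} (hk : k ≤ m) (hl : l ≤ m') :
    (X 0 + C a) ^ k * (X 1 + C b) ^ l ∈ Rmm m m' := by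
  rw [mem_Rmm_iff]
  have h00 : degreeOf (0 : Fin 2) (((X 0 + C a) : MvPolynomial (Fin 2) ℝ) ^ k) ≤ k := by simpa using degreeOf_binom_pow (0 : Fin 2) 0 a k
  have h01 : degreeOf (0 : Fin 2) (((X 1 + C b) : MvPolynomial (Fin 2) ℝ) ^ l) ≤ 0 := by simpa using degreeOf_binom_pow (0 : Fin 2) 1 b l
  have h10 : degreeOf (1 : Fin 2) (((X 0 + C a) : MvPolynomial (Fin 2) ℝ) ^ k) ≤ 0 := by simpa using degreeOf_binom_pow (1 : Fin 2) 0 a k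
  have h11 : degreeOf (1 : Fin 2) (((X 1 + C b) : MvPolynomial (Fin 2) ℝ) ^ l) ≤ l := by simpa using degreeOf_binom_pow (1 : Fin 2) 1 b l
  constructor
  · exact (degreeOf_mul_le _ _ _).trans (by omega)
  · exact (degreeOf_mul_le _ _ _).trans (by omega)

lemma tauAB_mem_Rmm {m m' : ℕ} (a b : ℝ) {p : MvPolynomial (Fin 2) ℝ} (hp : p ∈ Rmm m m') :
    tauAB a b p ∈ Rmm m m' := by
  have hrw : tauAB a b p = ∑ d ∈ p.support, tauAB a b (monomial d (coeff d p)) := by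
    conv_lhs => rw [p.as_sum]
    rw [map_sum]
  rw [hrw]
  refine Submodule.sum_mem _ fun d hd => ?_
  rw [tauAB_monomial, ← smul_eq_C_mul]
  exact Submodule.smul_mem _ _ (pow_mul_pow_mem_Rmm a b (hp d hd).1 (hp d hd).2)

lemma tauAB_sub0 (a b : ℝ) : tauAB a b (X 0 - C a) = X 0 := by
  show aeval ![X 0 + C a, X 1 + C b] (X 0 - C a) = X 0
  simp

lemma tauAB_sub1 (a b : ℝ) : tauAB a b (X 1 - C b) = X 1 := by
  show aeval ![X 0 + C a, X 1 + C b] (X 1 - C b) = X 1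
  simp

lemma mem_span_iff_tau (a b : ℝ) (r r' : ℕ) (p : MvPolynomial (Fin 2) ℝ) :
    p ∈ Ideal.span {(X 0 - C a) ^ (r + 1), (X 1 - C b) ^ (r' + 1)} ↔
      ∀ e ∈ (tauAB a b p).support,
        Finsupp.single 0 (r + 1) ≤ e ∨ Finsupp.single 1 (r' + 1) ≤ e := by
  have hmap : Ideal.map (tauAB a b : MvPolynomial (Fin 2) ℝ →+* MvPolynomial (Fin 2) ℝ)
      (Ideal.span {(X 0 - C a) ^ (r + 1), (X 1 - C b) ^ (r' + 1)}) =
      Ideal.span ((fun s => monomial s (1 : ℝ)) ''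
        {Finsupp.single 0 (r + 1), Finsupp.single 1 (r' + 1)}) := by
    rw [Ideal.map_span]
    congr 1
    simp only [Set.image_insert_eq, Set.image_singleton, map_pow, RingHom.coe_coe,
      tauAB_sub0, tauAB_sub1, X_pow_eq_monomial]
  have hsurj : Function.Surjective
      ((tauAB a b : MvPolynomial (Fin 2) ℝ →+* MvPolynomial (Fin 2) ℝ)) :=
    (tauAB a b).surjective
  have key : ∀ q : MvPolynomial (Fin 2) ℝ,
      (q ∈ Ideal.span ((fun s => monomial s (1 : ℝ)) ''
        {Finsupp.single 0 (r + 1), Finsupp.single 1 (r' + 1)}) ↔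
      ∀ e ∈ q.support,
        Finsupp.single 0 (r + 1) ≤ e ∨ Finsupp.single 1 (r' + 1) ≤ e) := by
    intro q
    rw [mem_ideal_span_monomial_image]
    simp only [Set.mem_insert_iff, Set.mem_singleton_iff, exists_eq_or_imp, exists_eq_left]
  constructor
  · intro hp
    have h2 : tauAB a b p ∈ Ideal.map
        (tauAB a b : MvPolynomial (Fin 2) ℝ →+* MvPolynomial (Fin 2) ℝ)
        (Ideal.span {(X 0 - C a) ^ (r + 1), (X 1 - C b) ^ (r' + 1)}) :=
      Ideal.mem_map_of_mem _ hp
    rw [hmap] at h2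
    exact (key _).mp h2
  · intro h
    have h2 := (key _).mpr h
    rw [← hmap] at h2
    obtain ⟨q, hq, hqe⟩ := (Ideal.mem_map_iff_of_surjective _ hsurj).mp h2
    rwa [(tauAB a b).injective hqe] at hq

lemma fin2_finsupp_eq (e : Fin 2 →₀ ℕ) :
    e = Finsupp.single 0 (e 0) + Finsupp.single 1 (e 1) := by
  ext x
  fin_cases x <;> simp [Finsupp.single_apply]

/-- The Taylor-coefficient linear map. -/
def Lmap (m m' r r' : ℕ) (a b : ℝ) :
    ↥(Rmm m m') →ₗ[ℝ] ((Fin (min r m + 1) × Fin (min r' m' + 1)) → ℝ) where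
  toFun p := fun ij =>
    coeff (Finsupp.single 0 (ij.1 : ℕ) + Finsupp.single 1 (ij.2 : ℕ)) (tauAB a b p.1)
  map_add' p q := by funext ij; simp
  map_smul' c p := by funext ij; simp

lemma ker_Lmap (m m' r r' : ℕ) (a b : ℝ) :
    LinearMap.ker (Lmap m m' r r' a b) =
      Submodule.comap (Rmm m m').subtype
        ((Ideal.span {(X 0 - C a) ^ (r + 1), (X 1 - C b) ^ (r' + 1)}).restrictScalars ℝ) := by
  ext p
  simp only [LinearMap.mem_ker, Submodule.mem_comap, Submodule.coe_subtype,
    Submodule.restrictScalars_mem]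
  rw [mem_span_iff_tau]
  constructor
  · intro h e he
    by_contra hcon
    push_neg at hcon
    obtain ⟨h0, h1⟩ := hcon
    rw [Finsupp.single_le_iff, not_le, Nat.lt_succ_iff] at h0 h1
    have hbd := tauAB_mem_Rmm a b p.2 e he
    have hi : e 0 < min r m + 1 := Nat.lt_succ_of_le (le_min h0 hbd.1)
    have hj : e 1 < min r' m' + 1 := Nat.lt_succ_of_le (le_min h1 hbd.2)
    have hc := congrFun h (⟨e 0, hi⟩, ⟨e 1, hj⟩)
    simp only [Lmap, LinearMap.coe_mk, AddHom.coe_mk, Pi.zero_apply] at hc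
    rw [← fin2_finsupp_eq] at hc
    exact (mem_support_iff.mp he) hc
  · intro h
    funext ij
    simp only [Lmap, LinearMap.coe_mk, AddHom.coe_mk, Pi.zero_apply]
    by_contra hne
    have hmem : (Finsupp.single 0 (ij.1 : ℕ) + Finsupp.single 1 (ij.2 : ℕ)) ∈
        (tauAB a b p.1).support := mem_support_iff.mpr hne
    rcases h _ hmem with h' | h'
    · rw [Finsupp.single_le_iff] at h'
      simp [Finsupp.single_apply] at h'
      have := ij.1.isLt
      omega
    · rw [Finsupp.single_le_iff] at h'
      simp [Finsupp.single_apply] at h'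
      have := ij.2.isLt
      omega

lemma surj_Lmap (m m' r r' : ℕ) (a b : ℝ) :
    Function.Surjective (Lmap m m' r r' a b) := by
  have hbasis : ∀ ij : Fin (min r m + 1) × Fin (min r' m' + 1),
      Pi.single ij (1 : ℝ) ∈ LinearMap.range (Lmap m m' r r' a b) := by
    intro ij
    have hrw0 : (X 0 - C a : MvPolynomial (Fin 2) ℝ) = X 0 + C (-a) := by rw [map_neg, sub_eq_add_neg]
    have hrw1 : (X 1 - C b : MvPolynomial (Fin 2) ℝ) = X 1 + C (-b) := by rw [map_neg, sub_eq_add_neg]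
    have hq : (X 0 - C a) ^ (ij.1 : ℕ) * (X 1 - C b) ^ (ij.2 : ℕ) ∈ Rmm m m' := by
      rw [hrw0, hrw1]
      exact pow_mul_pow_mem_Rmm (-a) (-b)
        (le_trans (Nat.lt_succ_iff.mp ij.1.isLt) (min_le_right _ _))
        (le_trans (Nat.lt_succ_iff.mp ij.2.isLt) (min_le_right _ _))
    refine ⟨⟨_, hq⟩, ?_⟩
    funext ij'
    have htau : tauAB a b ((X 0 - C a) ^ (ij.1 : ℕ) * (X 1 - C b) ^ (ij.2 : ℕ)) =
        monomial (Finsupp.single 0 (ij.1 : ℕ) + Finsupp.single 1 (ij.2 : ℕ)) (1 : ℝ) := by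
      rw [map_mul, map_pow, map_pow, tauAB_sub0, tauAB_sub1, X_pow_eq_monomial,
        X_pow_eq_monomial, monomial_mul, one_mul]
    simp only [Lmap, LinearMap.coe_mk, AddHom.coe_mk, htau, coeff_monomial]
    by_cases hij : ij' = ij
    · subst hij
      simp [Pi.single_apply]
    · simp only [Pi.single_apply, if_neg hij, ite_eq_right_iff]
      intro he
      exfalso
      apply hij
      have h0 := DFunLike.congr_fun he 0
      have h1 := DFunLike.congr_fun he 1
      simp [Finsupp.single_apply] at h0 h1
      exact Prod.ext (Fin.ext h0.symm) (Fin.ext h1.symm)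
  intro v
  have hv : v ∈ LinearMap.range (Lmap m m' r r' a b) := by
    have hsum : v = ∑ ij : Fin (min r m + 1) × Fin (min r' m' + 1),
        v ij • (Pi.single ij 1 : (Fin (min r m + 1) × Fin (min r' m' + 1)) → ℝ) := by
      conv_lhs => rw [← Finset.univ_sum_single v]
      refine Finset.sum_congr rfl fun ij _ => ?_
      funext x
      simp only [Pi.single_apply, Pi.smul_apply, smul_eq_mul]
      split <;> simp_all
    rw [hsum]
    exact Submodule.sum_mem _ fun ij _ => Submodule.smul_mem _ _ (hbasis ij)
  exact hv

end AuxVertex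

/-- for `I = R_{m,m'} ∩ ((s-a)^{r+1}, (t-b)^{r'+1})`, the quotient space
`R_{m,m'}/I` has dimension `(min r m + 1) * (min r' m' + 1)`. -/
theorem finrank_quotient_vertex_ideal (m m' r r' : ℕ) (a b : ℝ) :
    Module.finrank ℝ
        (↥(Rmm m m') ⧸
          Submodule.comap (Rmm m m').subtype
            ((Ideal.span {(X 0 - C a) ^ (r + 1), (X 1 - C b) ^ (r' + 1)}).restrictScalars ℝ)) =
      (min r m + 1) * (min r' m' + 1) := by
  rw [← ker_Lmap m m' r r' a b]
  rw [LinearEquiv.finrank_eq (LinearMap.quotKerEquivOfSurjective _ (surj_Lmap m m' r r' a b))]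
  rw [Module.finrank_fintype_fun_eq_card]
  simp [Fintype.card_prod]
end

section
/- Let p_1, p_2 ∈ ℝ[s,t] be bivariate polynomials, let l = αs + βt + c be a polynomial of degree one with (α,β) ≠ (0,0), and let r ∈ ℕ. Then all partial derivatives of p_1 and of p_2 of total order ≤ r coincide at every point of the line L = {(s,t) ∈ ℝ² : l(s,t) = 0} if and only if l^{r+1} divides p_1 − p_2 in ℝ[s,t]. -/
/-!
If `l ^ (r + 1)` divides `q`, then after at most `r` differentiations a factor `l` survives, so the
derivatives vanish on the line `l = 0`. Conversely, a polynomial vanishing on the line is divisible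
by `l`: modulo `l` it is congruent to its pullback under the affine retraction `x ↦ x - l(x) v`
(`α v₀ + β v₁ = 1`) onto the line, which is zero. Induction on `r` then does the rest: if
`q = l ^ (r + 1) * b` and `∂ᵢ l = γ ≠ 0`, the induction hypothesis applied to `∂ᵢ q` gives
`l ^ (r + 1) ∣ (r + 1) γ l ^ r b`, hence `l ∣ b`.
-/

open MvPolynomial

namespace Derivation

variable {R A : Type*} [CommRing R] [CommRing A] [Algebra R A] (D : Derivation R A A)

theorem apply_pow_succ_mul (a b : A) (n : ℕ) :
    D (a ^ (n + 1) * b) = a ^ n * (a * D b + (n + 1) • D a * b) := by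
  rw [leibniz, leibniz_pow, Nat.add_sub_cancel, smul_eq_mul, smul_eq_mul, nsmul_eq_mul,
    nsmul_eq_mul]
  ring

theorem pow_dvd_apply_of_pow_succ_dvd {a b : A} {n : ℕ} (h : a ^ (n + 1) ∣ b) :
    a ^ n ∣ D b := by
  obtain ⟨q, rfl⟩ := h
  rw [apply_pow_succ_mul]
  exact dvd_mul_right _ _

theorem pow_dvd_iterate_of_pow_add_dvd {a b : A} {n m : ℕ} (h : a ^ (n + m) ∣ b) :
    a ^ n ∣ D^[m] b := by
  induction m generalizing n with
  | zero => simpa using h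
  | succ m ih =>
    rw [Function.iterate_succ_apply']
    exact D.pow_dvd_apply_of_pow_succ_dvd (ih (by rwa [add_right_comm]))

theorem dvd_of_pow_succ_dvd_apply_pow_succ_mul [IsDomain A] {a b : A} {n : ℕ}
    (hu : IsUnit ((n + 1) • D a)) (h : a ^ (n + 1) ∣ D (a ^ (n + 1) * b)) : a ∣ b := by
  have ha : a ≠ 0 := by
    rintro rfl
    simp at hu
  rw [apply_pow_succ_mul, pow_succ, mul_dvd_mul_iff_left (pow_ne_zero n ha),
    dvd_add_right (dvd_mul_right _ _)] at h
  exact hu.dvd_mul_left.mp h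

end Derivation

namespace MvPolynomial

variable {σ R : Type*} [CommRing R]

theorem pderiv_comm (i j : σ) (p : MvPolynomial σ R) :
    pderiv i (pderiv j p) = pderiv j (pderiv i p) := by
  have h : ⁅pderiv i, pderiv j⁆ = (0 : Derivation R (MvPolynomial σ R) (MvPolynomial σ R)) :=
    derivation_ext fun k => by
      classical
      rw [Derivation.commutator_apply, pderiv_X, pderiv_X, Pi.single_apply, Pi.single_apply]
      split_ifs <;> simp
  rw [← sub_eq_zero, ← Derivation.commutator_apply, h, Derivation.zero_apply]

theorem dvd_of_forall_eval_eq_zero [IsDomain R] [Infinite R] {l p : MvPolynomial σ R}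
    (g : σ → MvPolynomial σ R) (hg : ∀ i, l ∣ X i - g i)
    (hgl : ∀ x, eval (fun i => eval x (g i)) l = 0)
    (hp : ∀ x, eval x l = 0 → eval x p = 0) : l ∣ p := by
  have hmod : (Ideal.Quotient.mkₐ R (Ideal.span {l})).comp (aeval g) =
      Ideal.Quotient.mkₐ R (Ideal.span {l}) :=
    algHom_ext fun i => by
      simpa [Ideal.Quotient.mkₐ_eq_mk, Ideal.Quotient.eq, Ideal.mem_span_singleton,
        dvd_sub_comm] using hg i
  have hzero : aeval g p = 0 := funext fun x => by
    rw [aeval_eq_bind₁, map_zero]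
    exact (eval₂Hom_bind₁ _ _ _ _).trans (hp _ (hgl x))
  rw [← Ideal.mem_span_singleton, ← Ideal.Quotient.eq_zero_iff_mem, ← Ideal.Quotient.mkₐ_eq_mk R,
    ← hmod, AlgHom.comp_apply, hzero, map_zero]

end MvPolynomial

section Line

variable {R : Type*} [CommRing R]

noncomputable def affineForm (α β c : R) : MvPolynomial (Fin 2) R := C α * X 0 + C β * X 1 + C c

theorem pderiv_affineForm (α β c : R) (i : Fin 2) :
    pderiv i (affineForm α β c) = C (![α, β] i) := by
  fin_cases i <;> simp [affineForm, pderiv_X]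

def VanishesToOrder (l : MvPolynomial (Fin 2) R) (r : ℕ) (q : MvPolynomial (Fin 2) R) : Prop :=
  ∀ j k : ℕ, j + k ≤ r → ∀ x : Fin 2 → R, eval x l = 0 →
    eval x ((pderiv 0)^[j] ((pderiv 1)^[k] q)) = 0

namespace VanishesToOrder

variable {l q : MvPolynomial (Fin 2) R} {r : ℕ}

theorem mono {s : ℕ} (h : VanishesToOrder l r q) (hsr : s ≤ r) : VanishesToOrder l s q :=
  fun j k hjk => h j k (hjk.trans hsr)

theorem pderiv (h : VanishesToOrder l (r + 1) q) :
    ∀ i, VanishesToOrder l r (MvPolynomial.pderiv i q)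
  | 0, j, k, hjk, x, hx => by
    have hcomm : Function.Commute (MvPolynomial.pderiv (R := R) (1 : Fin 2))
        (MvPolynomial.pderiv 0) := fun p => pderiv_comm 1 0 p
    rw [(hcomm.iterate_left k).eq, ← Function.iterate_succ_apply]
    exact h (j + 1) k (by omega) x hx
  | 1, j, k, hjk, x, hx => by
    rw [← Function.iterate_succ_apply]
    exact h j (k + 1) (by omega) x hx

end VanishesToOrder

theorem vanishesToOrder_of_pow_dvd {l q : MvPolynomial (Fin 2) R} {r : ℕ}
    (h : l ^ (r + 1) ∣ q) : VanishesToOrder l r q := by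
  intro j k hjk x hx
  have hk : l ^ (1 + j) ∣ (pderiv 1)^[k] q :=
    (pderiv 1).pow_dvd_iterate_of_pow_add_dvd ((pow_dvd_pow l (by omega)).trans h)
  obtain ⟨w, hw⟩ := pow_one l ▸ (pderiv 0).pow_dvd_iterate_of_pow_add_dvd hk
  rw [hw, eval_mul, hx, zero_mul]

end Line

section AffineForm

variable {K : Type*} [Field K] {α β c : K}

theorem affineForm_dvd_of_eval_eq_zero [Infinite K] (hαβ : α ≠ 0 ∨ β ≠ 0)
    {p : MvPolynomial (Fin 2) K} (hp : ∀ x, eval x (affineForm α β c) = 0 → eval x p = 0) :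
    affineForm α β c ∣ p := by
  obtain ⟨v, hv⟩ : ∃ v : Fin 2 → K, α * v 0 + β * v 1 = 1 := by
    rcases hαβ with hα | hβ
    · exact ⟨![α⁻¹, 0], by simp [hα]⟩
    · exact ⟨![0, β⁻¹], by simp [hβ]⟩
  refine dvd_of_forall_eval_eq_zero (fun i => X i - C (v i) * affineForm α β c) (fun i => ?_)
    (fun x => ?_) hp
  · simp
  · simp only [affineForm, map_add, map_mul, map_sub, eval_C, eval_X]
    linear_combination (-(α * x 0 + β * x 1 + c)) * hv

theorem pow_succ_dvd_of_vanishesToOrder [CharZero K] (hαβ : α ≠ 0 ∨ β ≠ 0) (r : ℕ)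
    {q : MvPolynomial (Fin 2) K} (h : VanishesToOrder (affineForm α β c) r q) :
    affineForm α β c ^ (r + 1) ∣ q := by
  induction r generalizing q with
  | zero =>
    rw [zero_add, pow_one]
    exact affineForm_dvd_of_eval_eq_zero hαβ fun x hx => h 0 0 le_rfl x hx
  | succ r ih =>
    obtain ⟨b, rfl⟩ := ih (h.mono r.le_succ)
    obtain ⟨i, hi⟩ : ∃ i : Fin 2, ![α, β] i ≠ 0 := hαβ.elim (⟨0, ·⟩) (⟨1, ·⟩)
    have hunit : IsUnit ((r + 1) • pderiv i (affineForm α β c)) := by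
      rw [pderiv_affineForm, ← map_nsmul, nsmul_eq_mul]
      exact (IsUnit.mk0 _ (mul_ne_zero (Nat.cast_ne_zero.mpr r.succ_ne_zero) hi)).map C
    have hb : affineForm α β c ∣ b :=
      (pderiv i).dvd_of_pow_succ_dvd_apply_pow_succ_mul hunit (ih (h.pderiv i))
    rw [pow_succ]
    exact mul_dvd_mul_left _ hb

theorem vanishesToOrder_affineForm_iff [CharZero K] (hαβ : α ≠ 0 ∨ β ≠ 0) (r : ℕ)
    (q : MvPolynomial (Fin 2) K) :
    VanishesToOrder (affineForm α β c) r q ↔ affineForm α β c ^ (r + 1) ∣ q :=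
  ⟨pow_succ_dvd_of_vanishesToOrder hαβ r, vanishesToOrder_of_pow_dvd⟩

end AffineForm

/-- for bivariate polynomials `p₁, p₂ ∈ ℝ[s,t]`, a degree-one polynomial
`l = α s + β t + c` with `(α, β) ≠ (0, 0)` and `r ∈ ℕ`, all partial derivatives of `p₁` and
`p₂` of total order at most `r` coincide at every point of the line `{l = 0}` iff
`l^{r+1}` divides `p₁ - p₂`. -/
theorem derivatives_coincide_on_line_iff_dvd
    (p₁ p₂ : MvPolynomial (Fin 2) ℝ) (α β c : ℝ) (hαβ : α ≠ 0 ∨ β ≠ 0) (r : ℕ) :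
    (∀ j k : ℕ, j + k ≤ r → ∀ x : Fin 2 → ℝ,
        eval x (C α * X 0 + C β * X 1 + C c) = 0 →
        eval x ((fun p => pderiv 0 p)^[j] ((fun p => pderiv 1 p)^[k] p₁)) =
          eval x ((fun p => pderiv 0 p)^[j] ((fun p => pderiv 1 p)^[k] p₂))) ↔
      (C α * X 0 + C β * X 1 + C c) ^ (r + 1) ∣ p₁ - p₂ := by
  refine Iff.trans ?_ (vanishesToOrder_affineForm_iff hαβ r (p₁ - p₂))
  simp only [VanishesToOrder, iterate_map_sub, eval_sub, sub_eq_zero]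
  rfl
end

section
/- Let r, r' ∈ ℕ, a, b ∈ ℝ, and in R = ℝ[s,t] set Δ = (t−b)^{r'+1} and Δ' = (s−a)^{r+1}. Then the kernel of the R-module homomorphism R⁴ → R given by (p_1, p_2, p_3, p_4) ↦ (p_1 + p_2)·Δ + (p_3 + p_4)·Δ' is exactly the R-submodule of R⁴ generated by the three elements (1, −1, 0, 0), (0, 0, 1, −1) and (0, Δ', −Δ, 0). -/
/-!
Over ℝ[s,t], which is a UFD, `Δ = (t - b)^(r'+1)` and `Δ' = (s - a)^(r+1)` are relatively prime,
being powers of non-associate primes. So in a syzygy `(p₁ + p₂)Δ + (p₃ + p₄)Δ' = 0` the factor `Δ`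
divides `p₃ + p₄ = qΔ`, and cancelling `Δ` gives `p₁ + p₂ = -qΔ'`; hence
`p = p₁(1,-1,0,0) - p₄(0,0,1,-1) - q(0,Δ',-Δ,0)`.
-/

open MvPolynomial

namespace MvPolynomial

variable {σ R : Type*} [CommRing R]

theorem prime_X_sub_C [IsCancelMulZero R] [Nontrivial R] (i : σ) (b : R) :
    Prime (X i - C b : MvPolynomial σ R) := by
  let shift : MvPolynomial σ R ≃ₐ[R] MvPolynomial σ R :=
    AlgEquiv.ofAlgHom (aeval fun j => X j - C b) (aeval fun j => X j + C b)
      (algHom_ext fun j => by simp) (algHom_ext fun j => by simp)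
  have hshift : shift (X i) = X i - C b := aeval_X _ i
  rw [← hshift, MulEquiv.prime_iff]
  exact X_prime

theorem not_X_sub_C_dvd_X_sub_C [Nontrivial R] {i j : σ} (hij : i ≠ j) (a b : R) :
    ¬ (X i - C b : MvPolynomial σ R) ∣ X j - C a := by
  classical
  intro h
  have := (eval (Function.update (fun _ => a + 1) i b)).map_dvd h
  simp [Function.update_of_ne hij.symm] at this

theorem isRelPrime_X_sub_C_pow [IsDomain R] [DecompositionMonoid (MvPolynomial σ R)]
    {i j : σ} (hij : i ≠ j) (a b : R) (m n : ℕ) :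
    IsRelPrime ((X i - C b : MvPolynomial σ R) ^ m) ((X j - C a) ^ n) :=
  ((prime_X_sub_C i b).irreducible.isRelPrime_iff_not_dvd.mpr
    (not_X_sub_C_dvd_X_sub_C hij a b)).pow

end MvPolynomial

section VertexSyzygies

variable {R : Type*} [CommRing R]

theorem vertexSyzygy_of_mem_span {D D' : R} {p : Fin 4 → R}
    (hp : p ∈ Submodule.span R ({![1, -1, 0, 0], ![0, 0, 1, -1], ![0, D', -D, 0]} :
      Set (Fin 4 → R))) :
    (p 0 + p 1) * D + (p 2 + p 3) * D' = 0 := by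
  obtain ⟨c₁, c₂, c₃, rfl⟩ := Submodule.mem_span_triple.mp hp
  simp only [Pi.add_apply, Pi.smul_apply, smul_eq_mul, Matrix.cons_val]
  ring

theorem mem_span_of_vertexSyzygy [IsDomain R] [DecompositionMonoid R] {D D' : R}
    (hD : D ≠ 0) (hcop : IsRelPrime D D') {p : Fin 4 → R}
    (hp : (p 0 + p 1) * D + (p 2 + p 3) * D' = 0) :
    p ∈ Submodule.span R ({![1, -1, 0, 0], ![0, 0, 1, -1], ![0, D', -D, 0]} :
      Set (Fin 4 → R)) := by
  obtain ⟨q, hq⟩ : D ∣ p 2 + p 3 :=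
    hcop.dvd_of_dvd_mul_right ⟨-(p 0 + p 1), by linear_combination hp⟩
  have h1 : p 1 = -p 0 - q * D' :=
    mul_right_cancel₀ hD (by linear_combination hp - D' * hq)
  have h2 : p 2 = -p 3 + D * q := by linear_combination hq
  refine Submodule.mem_span_triple.mpr ⟨p 0, -p 3, -q, funext fun k => ?_⟩
  fin_cases k <;> simp [h1, h2] <;> ring

theorem vertexSyzygy_iff_mem_span [IsDomain R] [DecompositionMonoid R] {D D' : R}
    (hD : D ≠ 0) (hcop : IsRelPrime D D') (p : Fin 4 → R) :
    (p 0 + p 1) * D + (p 2 + p 3) * D' = 0 ↔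
      p ∈ Submodule.span R ({![1, -1, 0, 0], ![0, 0, 1, -1], ![0, D', -D, 0]} :
        Set (Fin 4 → R)) :=
  ⟨mem_span_of_vertexSyzygy hD hcop, vertexSyzygy_of_mem_span⟩

end VertexSyzygies

/-- with `R = ℝ[s,t]`, `Δ = (t-b)^{r'+1}` and `Δ' = (s-a)^{r+1}`, the kernel of
the `R`-module map `R⁴ → R`, `(p₁,p₂,p₃,p₄) ↦ (p₁+p₂)Δ + (p₃+p₄)Δ'` is exactly the
`R`-submodule of `R⁴` generated by `(1,-1,0,0)`, `(0,0,1,-1)` and `(0,Δ',-Δ,0)`. -/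
theorem kernel_vertex_map_eq_span (r r' : ℕ) (a b : ℝ) :
    ∀ p : Fin 4 → MvPolynomial (Fin 2) ℝ,
      (p 0 + p 1) * (X 1 - C b) ^ (r' + 1) + (p 2 + p 3) * (X 0 - C a) ^ (r + 1) = 0 ↔
        p ∈ Submodule.span (MvPolynomial (Fin 2) ℝ)
          ({![1, -1, 0, 0], ![0, 0, 1, -1],
            ![0, (X 0 - C a) ^ (r + 1), -((X 1 - C b) ^ (r' + 1)), 0]} :
            Set (Fin 4 → MvPolynomial (Fin 2) ℝ)) :=
  vertexSyzygy_iff_mem_span (pow_ne_zero _ (prime_X_sub_C 1 b).ne_zero)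
    (isRelPrime_X_sub_C_pow (by decide) a b _ _)
end
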